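/- If Z ~ EC*(φ₁, φ₂), then E(Z) = [(1−|φ₂|²)φ₁ + (1−|φ₁|²)φ₂] / (1 − |φ₁φ₂|²), valid for all φ₁, φ₂ in the open unit disc. -/

import Mathlib

/-!
On the unit circle the `EC*(φ₁, φ₂)` density is `(2π)⁻¹ K P_{φ₁} P_{φ₂}`, where `P_w` is the
Poisson kernel of the disc and `K` the normalizing constant. Since `conj z = z⁻¹` on the circle,
`z P_{φ₂}(z) = h z + conj (g z)` with `h z = z / (1 - conj φ₂ z)` and
`g z = conj φ₂ / (1 - conj φ₂ z)` holomorphic on the closed disc. The Poisson integral formula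
turns the mean `K ⨍ P_{φ₁}(z) z P_{φ₂}(z)` into `K (h φ₁ + conj (g φ₁))`, which simplifies to the
claimed value.
-/

open Real Complex intervalIntegral

/-- The density (with respect to arc length) of the `EC*(φ₁, φ₂)` distribution on
the unit circle. -/
noncomputable def ecDensity (φ₁ φ₂ z : ℂ) : ℝ :=
  (1 / (2 * Real.pi)) *
    (‖1 - φ₁ * (starRingEnd ℂ) φ₂‖ ^ 2 /
      (1 - ‖φ₁ * (starRingEnd ℂ) φ₂‖ ^ 2)) *
    ((1 - ‖φ₁‖ ^ 2) / ‖z - φ₁‖ ^ 2) *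
    ((1 - ‖φ₂‖ ^ 2) / ‖z - φ₂‖ ^ 2)

open Metric ComplexConjugate

section PoissonKernel

variable {E : Type*} [NormedAddCommGroup E] {c w : ℂ} {R : ℝ}

theorem continuousOn_poissonKernel_sphere (hw : w ∈ ball c R) :
    ContinuousOn (poissonKernel c w) (sphere c |R|) := by
  rw [poissonKernel_eq_re_herglotzRieszKernel]
  exact continuous_re.comp_continuousOn (continuousOn_herglotzRieszKernel_sphere hw)

theorem ContinuousOn.circleIntegrable_poissonKernel_smul [NormedSpace ℝ E] {f : ℂ → E}
    (hf : ContinuousOn f (sphere c |R|)) (hw : w ∈ ball c R) :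
    CircleIntegrable (poissonKernel c w • f) c R :=
  ((continuousOn_poissonKernel_sphere hw).smul hf).circleIntegrable'

theorem DiffContOnCl.continuousOn_sphere [NormedSpace ℂ E] {f : ℂ → E}
    (hf : DiffContOnCl ℂ f (ball c R)) (hR : 0 < R) : ContinuousOn f (sphere c |R|) := by
  rw [abs_of_pos hR, ← frontier_ball c hR.ne']
  exact hf.continuousOn.mono frontier_subset_closure

theorem DiffContOnCl.circleAverage_poissonKernel_smul_conj {f : ℂ → ℂ}
    (hf : DiffContOnCl ℂ f (ball c R)) (hw : w ∈ ball c R) :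
    Real.circleAverage (poissonKernel c w • fun z ↦ conj (f z)) c R = conj (f w) := by
  have h := (conjCLE : ℂ →L[ℝ] ℂ).circleAverage_comp_comm
    ((hf.continuousOn_sphere (pos_of_mem_ball hw)).circleIntegrable_poissonKernel_smul hw)
  rw [hf.circleAverage_poissonKernel_smul hw] at h
  convert h using 2
  · ext z
    simp [Complex.real_smul]
  · rfl

end PoissonKernel

theorem intervalIntegral_comp_exp_mul_I {E : Type*} [NormedAddCommGroup E] [NormedSpace ℝ E]
    (f : ℂ → E) :
    ∫ θ in -π..π, f (exp (θ * I)) = (2 * π) • Real.circleAverage f 0 1 := by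
  have hper : Function.Periodic (fun θ : ℝ ↦ f (circleMap 0 1 θ)) (2 * π) :=
    fun θ ↦ by simp only [periodic_circleMap 0 1 θ]
  have hshift := hper.intervalIntegral_add_eq (-π) 0
  rw [show -π + 2 * π = π by ring, zero_add] at hshift
  rw [Real.circleAverage_def, smul_smul, mul_inv_cancel₀ (by positivity), one_smul, ← hshift]
  simp [circleMap]

theorem one_sub_mul_ne_zero_of_norm_lt_one {b z : ℂ} (hb : ‖b‖ < 1) (hz : ‖z‖ ≤ 1) :
    1 - b * z ≠ 0 := by
  refine sub_ne_zero.mpr fun h ↦ ?_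
  have : ‖b * z‖ < 1 := by
    rw [norm_mul]; exact mul_lt_one_of_nonneg_of_lt_one_left (norm_nonneg b) hb hz
  simp [← h] at this

theorem diffContOnCl_div_one_sub_conj_mul {p : ℂ → ℂ} (hp : Differentiable ℂ p) {b : ℂ}
    (hb : ‖b‖ < 1) : DiffContOnCl ℂ (fun z ↦ p z / (1 - conj b * z)) (ball 0 1) := by
  refine DifferentiableOn.diffContOnCl ?_
  rw [closure_ball 0 one_ne_zero]
  refine hp.differentiableOn.div (by fun_prop) fun z hz ↦ ?_
  exact one_sub_mul_ne_zero_of_norm_lt_one (by rwa [norm_conj]) (by simpa using hz)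

theorem mul_poissonKernel_zero_eq_add_conj {b z : ℂ} (hb : ‖b‖ < 1) (hz : ‖z‖ = 1) :
    z * poissonKernel 0 b z = z / (1 - conj b * z) + conj (conj b / (1 - conj b * z)) := by
  have hz0 : z ≠ 0 := by rintro rfl; simp at hz
  have hzb : z - b ≠ 0 := sub_ne_zero.mpr fun h ↦ by simp [h] at hz; linarith
  have hbz : 1 - z * conj b ≠ 0 := by
    rw [mul_comm]; exact one_sub_mul_ne_zero_of_norm_lt_one (by rwa [norm_conj]) hz.le
  have hconj : conj z = z⁻¹ := by
    rw [← mul_eq_one_iff_eq_inv₀ hz0, conj_mul', hz]; simp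
  rw [poissonKernel_def]
  simp only [sub_zero, hz]
  push_cast
  rw [← mul_conj', ← mul_conj']
  simp only [map_div₀, map_mul, map_sub, map_one, conj_conj, hconj]
  field_simp
  ring

theorem circleAverage_poissonKernel_smul_mul_poissonKernel {a b : ℂ} (ha : ‖a‖ < 1)
    (hb : ‖b‖ < 1) :
    Real.circleAverage (poissonKernel 0 a • fun z ↦ z * poissonKernel 0 b z) 0 1 =
      a / (1 - conj b * a) + b / (1 - conj a * b) := by
  have ha' : a ∈ ball 0 1 := mem_ball_zero_iff.mpr ha
  have hh : DiffContOnCl ℂ (fun z ↦ z / (1 - conj b * z)) (ball 0 1) :=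
    diffContOnCl_div_one_sub_conj_mul differentiable_id hb
  have hg : DiffContOnCl ℂ (fun z ↦ conj b / (1 - conj b * z)) (ball 0 1) :=
    diffContOnCl_div_one_sub_conj_mul (differentiable_const _) hb
  have hg' : ContinuousOn (fun z ↦ conj (conj b / (1 - conj b * z))) (sphere 0 |1|) :=
    continuous_conj.comp_continuousOn (hg.continuousOn_sphere one_pos)
  calc Real.circleAverage (poissonKernel 0 a • fun z ↦ z * poissonKernel 0 b z) 0 1
      = Real.circleAverage ((poissonKernel 0 a • fun z ↦ z / (1 - conj b * z)) +
          poissonKernel 0 a • fun z ↦ conj (conj b / (1 - conj b * z))) 0 1 := by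
        refine Real.circleAverage_congr_sphere fun z hz ↦ ?_
        simp only [Pi.add_apply, Pi.smul_apply', ← smul_add]
        rw [mul_poissonKernel_zero_eq_add_conj hb (by simpa using hz)]
    _ = a / (1 - conj b * a) + conj (conj b / (1 - conj b * a)) := by
        rw [Real.circleAverage_add
          ((hh.continuousOn_sphere one_pos).circleIntegrable_poissonKernel_smul ha')
          (hg'.circleIntegrable_poissonKernel_smul ha'),
          hh.circleAverage_poissonKernel_smul ha', hg.circleAverage_poissonKernel_smul_conj ha']
    _ = a / (1 - conj b * a) + b / (1 - conj a * b) := by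
        simp [mul_comm]

noncomputable def ecNormalizer (a b : ℂ) : ℝ :=
  ‖1 - a * conj b‖ ^ 2 / (1 - ‖a * conj b‖ ^ 2)

theorem ecDensity_eq_poissonKernel (a b : ℂ) {z : ℂ} (hz : ‖z‖ = 1) :
    ecDensity a b z =
      (2 * π)⁻¹ * ecNormalizer a b * (poissonKernel 0 a z * poissonKernel 0 b z) := by
  simp only [ecDensity, ecNormalizer, poissonKernel_def, sub_zero, hz]
  ring

theorem ecNormalizer_mul_eq {a b : ℂ} (ha : ‖a‖ < 1) (hb : ‖b‖ < 1) :
    (ecNormalizer a b : ℂ) * (a / (1 - conj b * a) + b / (1 - conj a * b)) =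
      (((1 - ‖b‖ ^ 2 : ℝ) : ℂ) * a + ((1 - ‖a‖ ^ 2 : ℝ) : ℂ) * b) /
        ((1 - ‖a * b‖ ^ 2 : ℝ) : ℂ) := by
  have hab : 1 - a * conj b ≠ 0 := by
    rw [mul_comm]; exact one_sub_mul_ne_zero_of_norm_lt_one (by rwa [norm_conj]) ha.le
  have hba : 1 - conj a * b ≠ 0 := one_sub_mul_ne_zero_of_norm_lt_one (by rwa [norm_conj]) hb.le
  have hn : 1 - a * conj b * conj a * b ≠ 0 := by
    rw [mul_assoc]
    refine one_sub_mul_ne_zero_of_norm_lt_one ?_ ?_ <;> simp only [norm_mul, norm_conj]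
    · exact mul_lt_one_of_nonneg_of_lt_one_left (norm_nonneg a) ha hb.le
    · exact mul_le_one₀ ha.le (norm_nonneg b) hb.le
  unfold ecNormalizer
  push_cast
  simp only [← mul_conj', map_sub, map_mul, map_one, conj_conj]
  field_simp
  ring

/-- The first trigonometric moment (mean) of `Z ~ EC*(φ₁, φ₂)`, valid for all `φ₁, φ₂`
in the open unit disc. -/
theorem ecStar_first_trig_moment (φ₁ φ₂ : ℂ)
    (hφ₁ : ‖φ₁‖ < 1) (hφ₂ : ‖φ₂‖ < 1) :
    ∫ θ in (-Real.pi)..Real.pi,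
      Complex.exp (θ * Complex.I) *
        ((ecDensity φ₁ φ₂ (Complex.exp (θ * Complex.I)) : ℝ) : ℂ)
      = (((1 - ‖φ₂‖ ^ 2 : ℝ) : ℂ) * φ₁ + ((1 - ‖φ₁‖ ^ 2 : ℝ) : ℂ) * φ₂) /
          ((1 - ‖φ₁ * φ₂‖ ^ 2 : ℝ) : ℂ) := by
  calc ∫ θ in -π..π, exp (θ * I) * (ecDensity φ₁ φ₂ (exp (θ * I)) : ℂ)
      = (2 * π) • Real.circleAverage (fun z ↦ z * (ecDensity φ₁ φ₂ z : ℂ)) 0 1 :=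
        intervalIntegral_comp_exp_mul_I (fun z ↦ z * (ecDensity φ₁ φ₂ z : ℂ))
    _ = (2 * π) • Real.circleAverage (((2 * π)⁻¹ * ecNormalizer φ₁ φ₂) •
          (poissonKernel 0 φ₁ • fun z ↦ z * poissonKernel 0 φ₂ z)) 0 1 := by
        congr 1
        refine Real.circleAverage_congr_sphere fun z hz ↦ ?_
        rw [ecDensity_eq_poissonKernel φ₁ φ₂ (by simpa using hz)]
        simp only [Pi.smul_apply, Pi.smul_apply', Complex.real_smul]
        push_cast
        ring
    _ = (ecNormalizer φ₁ φ₂ : ℂ) * (φ₁ / (1 - conj φ₂ * φ₁) + φ₂ / (1 - conj φ₁ * φ₂)) := by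
        rw [Real.circleAverage_smul, smul_smul,
          circleAverage_poissonKernel_smul_mul_poissonKernel hφ₁ hφ₂,
          mul_inv_cancel_left₀ (by positivity), Complex.real_smul]
    _ = _ := ecNormalizer_mul_eq hφ₁ hφ₂
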